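/- Let d ≥ 2 and define m_d(y) = g(h⁻¹(y)) with g(z) = -log z - (d-1)·log((d-z)/(d-1)) and h(z) = z·log z + (d-z)·log((d-z)/(d-1)) on (1,d). Then lim_{y → 0⁺} m_d(y)/y = 1. -/

import Mathlib

/-!
Both `g` and `h` vanish at `1`, and `h` is continuous and strictly increasing on `[1, d)`,
so `z = h⁻¹ y → 1⁺` as `y → 0⁺` and `m_d(y) / y = g z / h z`. By L'Hôpital's rule this ratio
has the limit of `g' / h'`, where `g' z = -1/z + (d-1)/(d-z)` and
`h' z = log z - log ((d-z)/(d-1))` again vanish at `1`, with the same derivative `1 + 1/(d-1)`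
there.
-/

open Real Filter Set Function Topology

theorem tendsto_div_of_hasDerivAt_of_eq_zero {f g : ℝ → ℝ} {f' g' x : ℝ}
    (hf : HasDerivAt f f' x) (hg : HasDerivAt g g' x) (hf0 : f x = 0) (hg0 : g x = 0)
    (hg' : g' ≠ 0) :
    Tendsto (fun z => f z / g z) (𝓝[≠] x) (𝓝 (f' / g')) := by
  refine ((hasDerivAt_iff_tendsto_slope.1 hf).div
    (hasDerivAt_iff_tendsto_slope.1 hg) hg').congr' ?_
  filter_upwards [self_mem_nhdsWithin] with z hz
  simp only [Pi.div_apply, slope_def_field, hf0, hg0, sub_zero]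
  exact div_div_div_cancel_right₀ (sub_ne_zero.2 hz) _ _

section InvFunOn

variable {f : ℝ → ℝ} {a b : ℝ}

theorem StrictMonoOn.eventually_invFunOn_mem_Ioo (hmono : StrictMonoOn f (Ico a b))
    (hcont : ContinuousOn f (Ico a b)) {c : ℝ} (hac : a < c) (hcb : c < b) :
    ∀ᶠ y in 𝓝[>] (f a),
      invFunOn f (Ioo a b) y ∈ Ioo a c ∧ f (invFunOn f (Ioo a b) y) = y := by
  have hfac : f a < f c := hmono (left_mem_Ico.2 (hac.trans hcb)) ⟨hac.le, hcb⟩ hac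
  filter_upwards [Ioo_mem_nhdsGT hfac] with y hy
  obtain ⟨x, hx, rfl⟩ :=
    intermediate_value_Ioo hac.le (hcont.mono (Icc_subset_Ico_right hcb)) hy
  rw [(hmono.injOn.mono Ioo_subset_Ico_self).leftInvOn_invFunOn ⟨hx.1, hx.2.trans hcb⟩]
  exact ⟨hx, rfl⟩

theorem StrictMonoOn.tendsto_invFunOn_nhdsGT (hmono : StrictMonoOn f (Ico a b))
    (hcont : ContinuousOn f (Ico a b)) (hab : a < b) :
    Tendsto (invFunOn f (Ioo a b)) (𝓝[>] (f a)) (𝓝[>] a) := by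
  refine (nhdsGT_basis a).tendsto_right_iff.2 fun c hac => ?_
  have hac' : a < min c ((a + b) / 2) := lt_min hac (by linarith)
  have hcb : min c ((a + b) / 2) < b := (min_le_right _ _).trans_lt (by linarith)
  filter_upwards [hmono.eventually_invFunOn_mem_Ioo hcont hac' hcb] with y hy
  exact Ioo_subset_Ioo_right (min_le_left _ _) hy.1

theorem StrictMonoOn.eventually_apply_invFunOn (hmono : StrictMonoOn f (Ico a b))
    (hcont : ContinuousOn f (Ico a b)) (hab : a < b) :
    ∀ᶠ y in 𝓝[>] (f a), f (invFunOn f (Ioo a b) y) = y :=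
  (hmono.eventually_invFunOn_mem_Ioo hcont (c := (a + b) / 2) (by linarith) (by linarith)).mono
    fun _ hy => hy.2

end InvFunOn

noncomputable section MdRatio

variable {d z : ℝ}

def mdG (d z : ℝ) : ℝ := -log z - (d - 1) * log ((d - z) / (d - 1))

def mdH (d z : ℝ) : ℝ := z * log z + (d - z) * log ((d - z) / (d - 1))

def mdG' (d z : ℝ) : ℝ := -z⁻¹ + (d - 1) * (d - z)⁻¹

def mdH' (d z : ℝ) : ℝ := log z - log ((d - z) / (d - 1))

theorem hasDerivAt_log_sub_div {c : ℝ} (hz : z ≠ d) (hc : c ≠ 0) :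
    HasDerivAt (fun z => log ((d - z) / c)) (-(d - z)⁻¹) z := by
  have hlin : HasDerivAt (fun z => (d - z) / c) (-1 / c) z :=
    ((hasDerivAt_id' z).const_sub d).div_const c
  refine ((hasDerivAt_log (div_ne_zero (sub_ne_zero.2 hz.symm) hc)).comp z hlin).congr_deriv ?_
  field_simp

theorem hasDerivAt_mdG (hz : z ≠ 0) (hzd : z ≠ d) (hd : d ≠ 1) :
    HasDerivAt (mdG d) (mdG' d z) z := by
  refine ((hasDerivAt_log hz).neg.sub
    ((hasDerivAt_log_sub_div hzd (sub_ne_zero.2 hd)).const_mul (d - 1))).congr_deriv ?_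
  simp only [mdG']
  ring

theorem hasDerivAt_mdH (hz : z ≠ 0) (hzd : z ≠ d) (hd : d ≠ 1) :
    HasDerivAt (mdH d) (mdH' d z) z := by
  refine ((hasDerivAt_mul_log hz).add
    (((hasDerivAt_id' z).const_sub d).mul
      (hasDerivAt_log_sub_div hzd (sub_ne_zero.2 hd)))).congr_deriv ?_
  simp only [mdH']
  field_simp
  ring

theorem mdG_one (hd : d ≠ 1) : mdG d 1 = 0 := by
  simp [mdG, div_self (sub_ne_zero.2 hd)]

theorem mdH_one (hd : d ≠ 1) : mdH d 1 = 0 := by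
  simp [mdH, div_self (sub_ne_zero.2 hd)]

theorem mdG'_one (hd : d ≠ 1) : mdG' d 1 = 0 := by
  simp [mdG', mul_inv_cancel₀ (sub_ne_zero.2 hd)]

theorem mdH'_one (hd : d ≠ 1) : mdH' d 1 = 0 := by
  simp [mdH', div_self (sub_ne_zero.2 hd)]

theorem mdH'_pos (hd : 1 < d) (hz1 : 1 < z) (hzd : z < d) : 0 < mdH' d z := by
  have hd1 : 0 < d - 1 := sub_pos.2 hd
  have hlt : (d - z) / (d - 1) < z := by
    rw [div_lt_iff₀ hd1]
    nlinarith
  exact sub_pos.2 (log_lt_log (div_pos (sub_pos.2 hzd) hd1) hlt)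

theorem hasDerivAt_mdG'_one (hd : d ≠ 1) : HasDerivAt (mdG' d) (1 + (d - 1)⁻¹) 1 := by
  have hd1 : d - 1 ≠ 0 := sub_ne_zero.2 hd
  have hinv : HasDerivAt (fun z : ℝ => (d - z)⁻¹) (((d - 1) ^ 2)⁻¹) 1 := by
    refine ((hasDerivAt_inv hd1).comp (1 : ℝ)
      ((hasDerivAt_id' (1 : ℝ)).const_sub d)).congr_deriv ?_
    simp
  refine ((hasDerivAt_inv one_ne_zero).neg.add (hinv.const_mul (d - 1))).congr_deriv ?_
  field_simp

theorem hasDerivAt_mdH'_one (hd : 1 < d) : HasDerivAt (mdH' d) (1 + (d - 1)⁻¹) 1 := by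
  refine ((hasDerivAt_log one_ne_zero).sub
    (hasDerivAt_log_sub_div hd.ne (sub_ne_zero.2 hd.ne'))).congr_deriv ?_
  simp

theorem continuousOn_mdH (hd : 1 < d) : ContinuousOn (mdH d) (Ico 1 d) := fun z hz =>
  (hasDerivAt_mdH (by linarith [hz.1]) hz.2.ne hd.ne').continuousAt.continuousWithinAt

theorem strictMonoOn_mdH (hd : 1 < d) : StrictMonoOn (mdH d) (Ico 1 d) := by
  refine strictMonoOn_of_deriv_pos (convex_Ico 1 d) (continuousOn_mdH hd) fun z hz => ?_
  rw [interior_Ico] at hz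
  rw [(hasDerivAt_mdH (by linarith [hz.1]) hz.2.ne hd.ne').deriv]
  exact mdH'_pos hd hz.1 hz.2

theorem tendsto_mdG'_div_mdH' (hd : 1 < d) :
    Tendsto (fun z => mdG' d z / mdH' d z) (𝓝[≠] 1) (𝓝 1) := by
  have hpos : 0 < 1 + (d - 1)⁻¹ := by
    have : 0 < (d - 1)⁻¹ := inv_pos.2 (sub_pos.2 hd)
    linarith
  simpa [div_self hpos.ne'] using
    tendsto_div_of_hasDerivAt_of_eq_zero (hasDerivAt_mdG'_one hd.ne') (hasDerivAt_mdH'_one hd)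
      (mdG'_one hd.ne') (mdH'_one hd.ne') hpos.ne'

theorem tendsto_mdG_div_mdH (hd : 1 < d) :
    Tendsto (fun z => mdG d z / mdH d z) (𝓝[>] 1) (𝓝 1) := by
  have hIoo : Ioo 1 d ∈ 𝓝[>] (1 : ℝ) := Ioo_mem_nhdsGT hd
  have hzero {F : ℝ → ℝ} (hF : ContinuousAt F 1) (hF1 : F 1 = 0) : Tendsto F (𝓝[>] 1) (𝓝 0) :=
    hF1 ▸ hF.tendsto.mono_left nhdsWithin_le_nhds
  refine HasDerivAt.lhopital_zero_nhdsGT (f' := mdG' d) (g' := mdH' d) ?_ ?_ ?_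
    (hzero (hasDerivAt_mdG one_ne_zero hd.ne hd.ne').continuousAt (mdG_one hd.ne'))
    (hzero (hasDerivAt_mdH one_ne_zero hd.ne hd.ne').continuousAt (mdH_one hd.ne'))
    ((tendsto_mdG'_div_mdH' hd).mono_left (nhdsWithin_mono _ fun _ hz => ne_of_gt hz))
  · filter_upwards [hIoo] with z hz
    exact hasDerivAt_mdG (by linarith [hz.1]) hz.2.ne hd.ne'
  · filter_upwards [hIoo] with z hz
    exact hasDerivAt_mdH (by linarith [hz.1]) hz.2.ne hd.ne'
  · filter_upwards [hIoo] with z hz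
    exact (mdH'_pos hd hz.1 hz.2).ne'

end MdRatio

theorem m_d_tendsto_one (d : ℝ) (hd : 2 ≤ d)
    (g h : ℝ → ℝ)
    (hg : ∀ z, g z = -Real.log z - (d - 1) * Real.log ((d - z) / (d - 1)))
    (hh : ∀ z, h z = z * Real.log z + (d - z) * Real.log ((d - z) / (d - 1))) :
    Filter.Tendsto (fun y => g (Function.invFunOn h (Set.Ioo 1 d) y) / y)
      (nhdsWithin 0 (Set.Ioi 0)) (nhds 1) := by
  have hd1 : 1 < d := by linarith
  obtain rfl : g = mdG d := funext hg
  obtain rfl : h = mdH d := funext hh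
  have hmono := strictMonoOn_mdH hd1
  have hcont := continuousOn_mdH hd1
  have hlim : Tendsto (fun y => mdG d (invFunOn (mdH d) (Ioo 1 d) y) / y)
      (𝓝[>] (mdH d 1)) (𝓝 1) := by
    refine ((tendsto_mdG_div_mdH hd1).comp (hmono.tendsto_invFunOn_nhdsGT hcont hd1)).congr' ?_
    filter_upwards [hmono.eventually_apply_invFunOn hcont hd1] with y hy
    rw [comp_apply, hy]
  rwa [mdH_one hd1.ne'] at hlim
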